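/- arXiv:2410.11471 — 3 statements merged into one kernel-verified Lean document; each statement's English description precedes it below -/
import Mathlib

section
/- Let d ∈ ℕ, θ ∈ ℝ^d, and i, j ∈ {1,…,d}. Let F : ℝ^d → ℝ be three times continuously differentiable on a neighborhood of θ. For ε > 0 set λ₁(ε) = F(θ + ε(eᵢ+eⱼ)), λ₂(ε) = F(θ + εeᵢ), λ₃(ε) = F(θ + εeⱼ), λ₄(ε) = F(θ), and define n(ε) := λ₁(ε) + λ₂(ε) − 2·min(λ₁(ε), λ₂(ε)) + λ₃(ε) + λ₄(ε) − 2·min(λ₃(ε), λ₄(ε)) − 2·min(λ₁(ε) − min(λ₁(ε), λ₂(ε)), λ₃(ε) − min(λ₃(ε), λ₄(ε))) − 2·min(λ₂(ε) − min(λ₁(ε), λ₂(ε)), λ₄(ε) − min(λ₃(ε), λ₄(ε))). If ∂F/∂θⱼ(θ) > 0 and ∂²F/∂θᵢ∂θⱼ(θ) > 0, then n(ε)/ε² → ∂²F/∂θᵢ∂θⱼ(θ) as ε → 0⁺. -/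
/-! For small `ε > 0` all the minima in `n(ε)` resolve: `∂ⱼF(θ) > 0` gives `λ₄ < λ₃`, and
`∂ᵢ∂ⱼF(θ) > 0` makes the mixed second difference `Δ(ε) = λ₁ - λ₂ - λ₃ + λ₄` positive, i.e.
`λ₃ - λ₄ < λ₁ - λ₂`. With these orderings `n(ε) = Δ(ε)` exactly, and `Δ(ε) / ε² → ∂ᵢ∂ⱼF(θ)` by the
second-order Taylor expansion of `F` at `θ`. -/

open Filter Topology Asymptotics Metric

theorem HasFDerivAt.eventually_lt_nhdsGT {E : Type*} [NormedAddCommGroup E] [NormedSpace ℝ E]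
    {f : E → ℝ} {f' : E →L[ℝ] ℝ} {x w : E} (hf : HasFDerivAt f f' x) (hw : 0 < f' w) :
    ∀ᶠ h : ℝ in 𝓝[>] 0, f x < f (x + h • w) := by
  have hline : HasDerivAt (fun t : ℝ => x + t • w) w 0 := by
    simpa using ((hasDerivAt_id (0 : ℝ)).smul_const w).const_add x
  have hg := (by simpa using hf : HasFDerivAt f f' (x + (0 : ℝ) • w)).comp_hasDerivAt 0 hline
  filter_upwards [hg.tendsto_slope_zero_right.eventually (lt_mem_nhds hw), self_mem_nhdsWithin]
    with h hslope (hh : 0 < h)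
  simp only [Function.comp_apply, zero_add, zero_smul, add_zero, smul_eq_mul] at hslope
  exact sub_pos.mp ((mul_pos_iff_of_pos_left (inv_pos.mpr hh)).mp hslope)

section SecondDifference

variable {E F : Type*} [NormedAddCommGroup E] [NormedSpace ℝ E] [NormedAddCommGroup F]
  [NormedSpace ℝ F] {f : E → F} {f' : E → E →L[ℝ] F} {f'' : E →L[ℝ] E →L[ℝ] F} {x : E}

theorem isLittleO_second_difference_of_ball {r : ℝ} (hf : ∀ y ∈ ball x r, HasFDerivAt f (f' y) y)
    (hx : HasFDerivAt f' f'' x) {v w : E} (hvw : ‖v‖ + ‖w‖ < r) :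
    (fun h : ℝ => f (x + h • v + h • w) - f (x + h • v) - f (x + h • w) + f x
      - h ^ 2 • f'' v w) =o[𝓝[>] 0] fun h => h ^ 2 := by
  have hr : 0 < r := by linarith [norm_nonneg v, norm_nonneg w]
  have hint : interior (ball x r) = ball x r := isOpen_ball.interior_eq
  have hf' : ∀ y ∈ interior (ball x r), HasFDerivAt f (f' y) y := by rwa [hint]
  have hx' : HasFDerivWithinAt f' f'' (interior (ball x r)) x := hx.hasFDerivWithinAt
  have mem : ∀ u : E, ‖u‖ < r → x + u ∈ interior (ball x r) := fun u hu => by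
    simpa [hint] using hu
  have T₁ := (convex_ball x r).taylor_approx_two_segment hf' (mem_ball_self hr) hx'
    (mem v (by linarith [norm_nonneg w]))
    (by simpa [add_assoc] using mem _ ((norm_add_le v w).trans_lt hvw))
  have T₀ := (convex_ball x r).taylor_approx_two_segment hf' (mem_ball_self hr) hx'
    (v := 0) (by simpa using mem 0 (by simpa using hr))
    (by simpa using mem w (by linarith [norm_nonneg v]))
  refine (T₁.sub T₀).congr_left fun h => ?_
  simp only [smul_zero, add_zero, map_zero, zero_apply]
  abel

theorem isLittleO_second_difference (hf : ∀ᶠ y in 𝓝 x, HasFDerivAt f (f' y) y)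
    (hx : HasFDerivAt f' f'' x) (v w : E) :
    (fun h : ℝ => f (x + h • v + h • w) - f (x + h • v) - f (x + h • w) + f x
      - h ^ 2 • f'' v w) =o[𝓝[>] 0] fun h => h ^ 2 := by
  obtain ⟨r, hr, hball⟩ := eventually_nhds_iff_ball.mp hf
  -- shrink `v, w` into the ball, then undo the scaling in the parameter `h`
  obtain ⟨c, hc, hsmall⟩ : ∃ c : ℝ, 0 < c ∧ ‖c • v‖ + ‖c • w‖ < r := by
    refine ⟨r / (‖v‖ + ‖w‖ + 1), by positivity, ?_⟩
    rw [norm_smul, norm_smul, Real.norm_of_nonneg (by positivity), ← mul_add,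
      div_mul_eq_mul_div, div_lt_iff₀ (by positivity)]
    nlinarith
  have hscale : Tendsto (fun h : ℝ => c⁻¹ * h) (𝓝[>] 0) (𝓝[>] 0) := by
    have := tendsto_comap (f := fun h : ℝ => c⁻¹ * h) (x := 𝓝[>] 0)
    rwa [comap_mulLeft_nhdsGT_zero (inv_pos.mpr hc)] at this
  refine ((isLittleO_second_difference_of_ball hball hx hsmall).comp_tendsto hscale).congr'
    ?_ ?_ |>.trans_isBigO (isBigO_const_mul_self (c⁻¹ ^ 2) _ _)
  · filter_upwards with h
    simp only [Function.comp_apply, smul_smul, map_smul, smul_apply]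
    field_simp
  · filter_upwards with h
    simp only [Function.comp_apply]
    ring

theorem ContDiffAt.tendsto_second_difference_div_sq (hf : ContDiffAt ℝ 2 f x) (v w : E) :
    Tendsto (fun h : ℝ => (h ^ 2)⁻¹ • (f (x + h • v + h • w) - f (x + h • v) - f (x + h • w) + f x))
      (𝓝[>] 0) (𝓝 (fderiv ℝ (fun y => fderiv ℝ f y w) x v)) := by
  have hf' : ∀ᶠ y in 𝓝 x, HasFDerivAt f (fderiv ℝ f y) y :=
    (hf.eventually (by simp)).mono fun y hy => (hy.differentiableAt two_ne_zero).hasFDerivAt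
  have hx : HasFDerivAt (fderiv ℝ f) (fderiv ℝ (fderiv ℝ f) x) x :=
    ((hf.fderiv_right (m := 1) le_rfl).differentiableAt one_ne_zero).hasFDerivAt
  have hvw : fderiv ℝ (fun y => fderiv ℝ f y w) x v = fderiv ℝ (fderiv ℝ f) x v w := by
    rw [(hx.clm_apply (hasFDerivAt_const w x)).fderiv]
    simp
  rw [hvw]
  refine ((isLittleO_second_difference hf' hx v w).tendsto_inv_smul_nhds_zero.add_const
    (fderiv ℝ (fderiv ℝ f) x v w)).congr' ?_ |>.trans (by rw [zero_add])
  filter_upwards [self_mem_nhdsWithin] with h (hh : 0 < h)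
  rw [smul_sub, smul_smul, inv_mul_cancel₀ (by positivity), one_smul, sub_add_cancel]

end SecondDifference

theorem splitting_rate_eq_of_sub_le {l₁ l₂ l₃ l₄ : ℝ} (h₃₄ : l₄ ≤ l₃) (h : l₃ - l₄ ≤ l₁ - l₂) :
    l₁ + l₂ - 2 * min l₁ l₂ + l₃ + l₄ - 2 * min l₃ l₄
      - 2 * min (l₁ - min l₁ l₂) (l₃ - min l₃ l₄)
      - 2 * min (l₂ - min l₁ l₂) (l₄ - min l₃ l₄) = l₁ - l₂ - l₃ + l₄ := by
  rw [min_eq_right (by linarith : l₂ ≤ l₁), min_eq_right h₃₄, min_eq_right h, sub_self, sub_self,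
    min_self]
  ring

/-- Second-order Taylor expansion of the residual splitting rate `n_k(x, θ̂)` of the
four-fold split coupling, positive-sign case (eq. (A.3) of the paper):
`n(ε)/ε² → ∂²F/∂θᵢ∂θⱼ(θ)` as `ε → 0⁺` when both `∂F/∂θⱼ(θ) > 0` and
`∂²F/∂θᵢ∂θⱼ(θ) > 0`. -/
theorem splitting_rate_second_order_expansion_pos
    (d : ℕ) (θ : EuclideanSpace ℝ (Fin d)) (i j : Fin d)
    (F : EuclideanSpace ℝ (Fin d) → ℝ) (hF : ContDiffAt ℝ 3 F θ)
    (hj : 0 < fderiv ℝ F θ (EuclideanSpace.single j 1))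
    (hij : 0 < fderiv ℝ (fun x => fderiv ℝ F x (EuclideanSpace.single j 1)) θ
      (EuclideanSpace.single i 1)) :
    Tendsto (fun ε : ℝ =>
      let l1 : ℝ := F (θ + ε • (EuclideanSpace.single i 1 + EuclideanSpace.single j 1))
      let l2 : ℝ := F (θ + ε • EuclideanSpace.single i 1)
      let l3 : ℝ := F (θ + ε • EuclideanSpace.single j 1)
      let l4 : ℝ := F θ
      (l1 + l2 - 2 * min l1 l2 + l3 + l4 - 2 * min l3 l4
        - 2 * min (l1 - min l1 l2) (l3 - min l3 l4)
        - 2 * min (l2 - min l1 l2) (l4 - min l3 l4)) / ε ^ 2)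
      (𝓝[>] 0)
      (𝓝 (fderiv ℝ (fun x => fderiv ℝ F x (EuclideanSpace.single j 1)) θ
        (EuclideanSpace.single i 1))) := by
  set v := EuclideanSpace.single i (1 : ℝ)
  set w := EuclideanSpace.single j (1 : ℝ)
  have hsecond := (hF.of_le (by norm_num)).tendsto_second_difference_div_sq v w
  have hΔ := hsecond.eventually (lt_mem_nhds hij)
  have h₃₄ := (hF.differentiableAt (by norm_num)).hasFDerivAt.eventually_lt_nhdsGT hj
  refine hsecond.congr' ?_
  filter_upwards [hΔ, h₃₄, self_mem_nhdsWithin] with ε hΔ h₃₄ (hε : 0 < ε)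
  rw [smul_eq_mul, mul_pos_iff_of_pos_left (by positivity)] at hΔ
  dsimp only
  rw [smul_add ε v w, ← add_assoc, splitting_rate_eq_of_sub_le h₃₄.le (by linarith), smul_eq_mul,
    inv_mul_eq_div]
end

section
/- Let d ∈ ℕ, θ ∈ ℝ^d, and i, j ∈ {1,…,d}. Let F : ℝ^d → ℝ be three times continuously differentiable on a neighborhood of θ. For ε > 0 set λ₁(ε) = F(θ + ε(eᵢ+eⱼ)), λ₂(ε) = F(θ + εeᵢ), λ₃(ε) = F(θ + εeⱼ), λ₄(ε) = F(θ). If ∂F/∂θⱼ(θ) > 0 and ∂²F/∂θᵢ∂θⱼ(θ) > 0, then there exists ε₀ > 0 such that for all ε ∈ (0, ε₀): (a) λ₁(ε) − min(λ₁(ε), λ₂(ε)) − min(λ₁(ε) − min(λ₁(ε), λ₂(ε)), λ₃(ε) − min(λ₃(ε), λ₄(ε))) > 0; (b) λ₂(ε) − min(λ₁(ε), λ₂(ε)) − min(λ₂(ε) − min(λ₁(ε), λ₂(ε)), λ₄(ε) − min(λ₃(ε), λ₄(ε))) = 0; (c) λ₃(ε) − min(λ₃(ε), λ₄(ε)) −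 min(λ₁(ε) − min(λ₁(ε), λ₂(ε)), λ₃(ε) − min(λ₃(ε), λ₄(ε))) = 0; (d) λ₄(ε) − min(λ₃(ε), λ₄(ε)) − min(λ₂(ε) − min(λ₁(ε), λ₂(ε)), λ₄(ε) − min(λ₃(ε), λ₄(ε))) = 0. -/
/-!
On a small ball around `θ` both `∂ⱼF` and `∂ᵢ∂ⱼF` are positive. The mean value theorem along
`eⱼ` gives `l₄ < l₃`; applied to `x ↦ F (x + ε eᵢ) - F x`, whose derivative along `eⱼ` is
`∂ⱼF (x + ε eᵢ) - ∂ⱼF x > 0`, it gives `l₃ - l₄ < l₁ - l₂`. These two inequalities determine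
every `min` in the four residual intensities.
-/

open Filter Topology

section

variable {E : Type*} [NormedAddCommGroup E] [NormedSpace ℝ E]

theorem Convex.lt_apply_add_smul_of_fderiv_pos {G : E → ℝ} {U : Set E} (hU : Convex ℝ U)
    (hG : ∀ y ∈ U, DifferentiableAt ℝ G y) {v : E} (hpos : ∀ y ∈ U, 0 < fderiv ℝ G y v)
    {x : E} {t : ℝ} (ht : 0 < t) (hx : x ∈ U) (hxt : x + t • v ∈ U) :
    G x < G (x + t • v) := by
  obtain ⟨z, hz, hmvt⟩ := domain_mvt (fun y hy => (hG y hy).hasFDerivAt.hasFDerivWithinAt)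
    hU hx hxt
  have hzU : z ∈ U := hU.segment_subset hx hxt hz
  rw [add_sub_cancel_left, map_smul, smul_eq_mul] at hmvt
  linarith [mul_pos ht (hpos z hzU)]

theorem Convex.sub_lt_sub_of_fderiv_fderiv_pos {G : E → ℝ} {U : Set E} (hU : Convex ℝ U)
    {v w : E} (hG : ∀ y ∈ U, DifferentiableAt ℝ G y)
    (hGw : ∀ y ∈ U, DifferentiableAt ℝ (fun z => fderiv ℝ G z w) y)
    (hpos : ∀ y ∈ U, 0 < fderiv ℝ (fun z => fderiv ℝ G z w) y v)
    {x : E} {s t : ℝ} (hs : 0 < s) (ht : 0 < t) (hx : x ∈ U) (hxs : x + s • v ∈ U)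
    (hxt : x + t • w ∈ U) (hxst : x + s • v + t • w ∈ U) :
    G (x + t • w) - G x < G (x + s • v + t • w) - G (x + s • v) := by
  set V := U ∩ (fun y => y + s • v) ⁻¹' U
  have hV : Convex ℝ V := hU.inter (hU.translate_preimage_left _)
  have hdiff : ∀ y ∈ V, DifferentiableAt ℝ (fun z => G (z + s • v) - G z) y := fun y hy =>
    ((differentiableAt_comp_add_right _).2 (hG _ hy.2)).sub (hG y hy.1)
  have hderiv : ∀ y ∈ V, 0 < fderiv ℝ (fun z => G (z + s • v) - G z) y w := by
    intro y hy
    rw [fderiv_fun_sub ((differentiableAt_comp_add_right _).2 (hG _ hy.2)) (hG y hy.1),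
      fderiv_comp_add_right, sub_apply, sub_pos]
    exact hU.lt_apply_add_smul_of_fderiv_pos hGw hpos hs hy.1 hy.2
  have hxtV : x + t • w ∈ V := ⟨hxt, by simpa only [Set.mem_preimage, add_right_comm] using hxst⟩
  have key := hV.lt_apply_add_smul_of_fderiv_pos hdiff hderiv ht ⟨hx, hxs⟩ hxtV
  simp only [add_right_comm x (t • w)] at key
  linarith

theorem eventually_differentiableAt_and_fderiv_pos {G : E → ℝ} {x v w : E}
    (hG : ContDiffAt ℝ 2 G x) (hw : 0 < fderiv ℝ G x w)
    (hvw : 0 < fderiv ℝ (fun y => fderiv ℝ G y w) x v) :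
    ∀ᶠ y in 𝓝 x, DifferentiableAt ℝ G y ∧ DifferentiableAt ℝ (fun z => fderiv ℝ G z w) y ∧
      0 < fderiv ℝ G y w ∧ 0 < fderiv ℝ (fun z => fderiv ℝ G z w) y v := by
  have hB : ContDiffAt ℝ 1 (fun y => fderiv ℝ G y w) x :=
    (hG.fderiv_right (by norm_num)).clm_apply contDiffAt_const
  have hB' : ContinuousAt (fun y => fderiv ℝ (fun z => fderiv ℝ G z w) y v) x :=
    ((hB.fderiv_right (m := 0) le_rfl).clm_apply contDiffAt_const).continuousAt
  filter_upwards [hG.eventually (by norm_num), hB.eventually (by norm_num),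
    hB.continuousAt.eventually (eventually_gt_nhds hw), hB'.eventually (eventually_gt_nhds hvw)]
    with y hGy hBy hwy hvwy
  exact ⟨hGy.differentiableAt (by norm_num), hBy.differentiableAt one_ne_zero, hwy, hvwy⟩

end

theorem coupling_residuals_of_lt {l1 l2 l3 l4 : ℝ} (h34 : 0 < l3 - l4) (h : l3 - l4 < l1 - l2) :
    (0 < l1 - min l1 l2 - min (l1 - min l1 l2) (l3 - min l3 l4)) ∧
    (l2 - min l1 l2 - min (l2 - min l1 l2) (l4 - min l3 l4) = 0) ∧
    (l3 - min l3 l4 - min (l1 - min l1 l2) (l3 - min l3 l4) = 0) ∧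
    (l4 - min l3 l4 - min (l2 - min l1 l2) (l4 - min l3 l4) = 0) := by
  rw [min_eq_right (by linarith : l2 ≤ l1), min_eq_right (by linarith : l4 ≤ l3),
    min_eq_right h.le]
  refine ⟨by linarith, ?_, by ring, ?_⟩ <;> simp

/-- Identification of which single coupled process jumps at the first splitting time in
the positive-sign case (eq. (A.2), first case): for small `ε > 0`, the residual coupling
intensity `Λ_{k,(1,0,0,0)}` is positive while `Λ_{k,(0,1,0,0)}`, `Λ_{k,(0,0,1,0)}` and
`Λ_{k,(0,0,0,1)}` vanish. -/
theorem residual_coupling_intensities_pos_case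
    (d : ℕ) (θ : EuclideanSpace ℝ (Fin d)) (i j : Fin d)
    (F : EuclideanSpace ℝ (Fin d) → ℝ) (hF : ContDiffAt ℝ 3 F θ)
    (hj : 0 < fderiv ℝ F θ (EuclideanSpace.single j 1))
    (hij : 0 < fderiv ℝ (fun x => fderiv ℝ F x (EuclideanSpace.single j 1)) θ
      (EuclideanSpace.single i 1)) :
    ∃ ε₀ > 0, ∀ ε : ℝ, 0 < ε → ε < ε₀ →
      let l1 : ℝ := F (θ + ε • (EuclideanSpace.single i 1 + EuclideanSpace.single j 1))
      let l2 : ℝ := F (θ + ε • EuclideanSpace.single i 1)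
      let l3 : ℝ := F (θ + ε • EuclideanSpace.single j 1)
      let l4 : ℝ := F θ
      (0 < l1 - min l1 l2 - min (l1 - min l1 l2) (l3 - min l3 l4)) ∧
      (l2 - min l1 l2 - min (l2 - min l1 l2) (l4 - min l3 l4) = 0) ∧
      (l3 - min l3 l4 - min (l1 - min l1 l2) (l3 - min l3 l4) = 0) ∧
      (l4 - min l3 l4 - min (l2 - min l1 l2) (l4 - min l3 l4) = 0) := by
  obtain ⟨δ, hδ, hball⟩ := Metric.eventually_nhds_iff_ball.1
    (eventually_differentiableAt_and_fderiv_pos (hF.of_le (by norm_num)) hj hij)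
  refine ⟨δ / 2, half_pos hδ, fun ε hε hεδ => ?_⟩
  set ei : EuclideanSpace ℝ (Fin d) := EuclideanSpace.single i 1
  set ej : EuclideanSpace ℝ (Fin d) := EuclideanSpace.single j 1
  have hnorm (k : Fin d) : ‖ε • EuclideanSpace.single k (1 : ℝ)‖ = ε := by
    rw [norm_smul, PiLp.norm_single, norm_one, mul_one, Real.norm_of_nonneg hε.le]
  have hmem (v : EuclideanSpace ℝ (Fin d)) (hv : ‖v‖ ≤ 2 * ε) : θ + v ∈ Metric.ball θ δ := by
    rw [Metric.mem_ball, dist_eq_norm, add_sub_cancel_left]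
    linarith
  have hθ : θ ∈ Metric.ball θ δ := Metric.mem_ball_self hδ
  have hθi : θ + ε • ei ∈ Metric.ball θ δ := hmem _ (by linarith [hnorm i])
  have hθj : θ + ε • ej ∈ Metric.ball θ δ := hmem _ (by linarith [hnorm j])
  have hθij : θ + ε • ei + ε • ej ∈ Metric.ball θ δ := by
    rw [add_assoc]
    exact hmem _ (by linarith [norm_add_le (ε • ei) (ε • ej), hnorm i, hnorm j])
  have h34 : F θ < F (θ + ε • ej) := (convex_ball θ δ).lt_apply_add_smul_of_fderiv_pos
    (fun y hy => (hball y hy).1) (fun y hy => (hball y hy).2.2.1) hε hθ hθj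
  have h12 : F (θ + ε • ej) - F θ < F (θ + ε • ei + ε • ej) - F (θ + ε • ei) :=
    (convex_ball θ δ).sub_lt_sub_of_fderiv_fderiv_pos (fun y hy => (hball y hy).1)
      (fun y hy => (hball y hy).2.1) (fun y hy => (hball y hy).2.2.2) hε hε hθ hθi hθj hθij
  rw [smul_add, ← add_assoc]
  exact coupling_residuals_of_lt (sub_pos.2 h34) h12
end

section
/- Let d ∈ ℕ, θ ∈ ℝ^d, and i, j ∈ {1,…,d}. Let F : ℝ^d → ℝ be three times continuously differentiable on a neighborhood of θ. For ε > 0 set λ₁(ε) = F(θ + ε(eᵢ+eⱼ)), λ₂(ε) = F(θ + εeᵢ), λ₃(ε) = F(θ + εeⱼ), λ₄(ε) = F(θ), and define m(ε) := min(λ₁(ε), λ₂(ε)) + min(λ₃(ε), λ₄(ε)) − 2·min(λ₁(ε), λ₂(ε), λ₃(ε), λ₄(ε)). If ∂F/∂θⱼ(θ) > 0, then m(ε)/ε → |∂F/∂θᵢ(θ)| as ε → 0⁺. -/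
/-! For small `ε > 0` the directional derivative `∂ⱼF(θ) > 0` orders each pair of rates:
`F(θ + εeᵢ) < F(θ + ε(eᵢ + eⱼ))` and `F(θ) < F(θ + εeⱼ)`. Then `m(ε)` collapses to
`b + d - 2 min(b, d) = |b - d|` with `b = F(θ + εeᵢ)`, `d = F(θ)`, and `|b - d| / ε → |∂ᵢF(θ)|`. -/

open Filter Topology

theorem min_add_min_sub_two_mul_min_min_eq_abs {α : Type*} [Ring α] [LinearOrder α]
    [IsOrderedRing α] {a b c d : α} (hab : b ≤ a) (hcd : d ≤ c) :
    min a b + min c d - 2 * min (min a b) (min c d) = |b - d| := by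
  rw [min_eq_right hab, min_eq_right hcd, ← max_sub_min_eq_abs', ← min_add_max b d, two_mul]
  abel

section DirectionalDerivative

variable {𝕜 E F : Type*} [NontriviallyNormedField 𝕜] [NormedAddCommGroup E] [NormedSpace 𝕜 E]

theorem HasFDerivAt.hasDerivAt_comp_add_smul [NormedAddCommGroup F] [NormedSpace 𝕜 F]
    {f : E → F} {f' : E →L[𝕜] F} {x : E} (hf : HasFDerivAt f f' x) (v : E) :
    HasDerivAt (fun t : 𝕜 => f (x + t • v)) (f' v) 0 := by
  have hline : HasDerivAt (fun t : 𝕜 => x + t • v) v 0 := by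
    simpa using ((hasDerivAt_id (0 : 𝕜)).smul_const v).const_add x
  exact (by simpa using hf : HasFDerivAt f f' (x + (0 : 𝕜) • v)).comp_hasDerivAt 0 hline

theorem HasFDerivAt.tendsto_sub_div_of_add_smul {f : E → 𝕜} {f' : E →L[𝕜] 𝕜} {x : E}
    (hf : HasFDerivAt f f' x) (v w : E) :
    Tendsto (fun t : 𝕜 => (f (x + t • v) - f (x + t • w)) / t) (𝓝[≠] 0)
      (𝓝 (f' v - f' w)) := by
  refine ((hf.hasDerivAt_comp_add_smul v).sub (hf.hasDerivAt_comp_add_smul w)).tendsto_slope_zero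
    |>.congr fun t => ?_
  simp [div_eq_inv_mul]

end DirectionalDerivative

theorem eventually_pos_of_tendsto_div_nhdsGT {g : ℝ → ℝ} {c : ℝ}
    (hg : Tendsto (fun t => g t / t) (𝓝[>] 0) (𝓝 c)) (hc : 0 < c) :
    ∀ᶠ t in 𝓝[>] 0, 0 < g t := by
  filter_upwards [hg.eventually (eventually_gt_nhds hc), self_mem_nhdsWithin] with t hgt ht
  exact (div_pos_iff_of_pos_right ht).1 hgt

/-- First-order expansion (Step 1.4 of the proof of the main theorem):
`m(ε)/ε → |∂F/∂θᵢ(θ)|` as `ε → 0⁺`, where `m(ε)` is the rate at which the four-fold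
split coupling produces a simultaneous jump in exactly one pair of coupled processes. -/
theorem pair_splitting_rate_first_order_expansion
    (d : ℕ) (θ : EuclideanSpace ℝ (Fin d)) (i j : Fin d)
    (F : EuclideanSpace ℝ (Fin d) → ℝ) (hF : ContDiffAt ℝ 3 F θ)
    (hj : 0 < fderiv ℝ F θ (EuclideanSpace.single j 1)) :
    Tendsto (fun ε : ℝ =>
      (min (F (θ + ε • (EuclideanSpace.single i 1 + EuclideanSpace.single j 1)))
          (F (θ + ε • EuclideanSpace.single i 1))
        + min (F (θ + ε • EuclideanSpace.single j 1)) (F θ)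
        - 2 * min
            (min (F (θ + ε • (EuclideanSpace.single i 1 + EuclideanSpace.single j 1)))
              (F (θ + ε • EuclideanSpace.single i 1)))
            (min (F (θ + ε • EuclideanSpace.single j 1)) (F θ))) / ε)
      (𝓝[>] 0)
      (𝓝 |fderiv ℝ F θ (EuclideanSpace.single i 1)|) := by
  have hf := (hF.differentiableAt (by norm_num)).hasFDerivAt
  set ei := EuclideanSpace.single i (1 : ℝ)
  set ej := EuclideanSpace.single j (1 : ℝ)
  have slope (v w : EuclideanSpace ℝ (Fin d)) :=
    (hf.tendsto_sub_div_of_add_smul v w).mono_left (nhdsGT_le_nhdsNE 0)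
  have h12 : ∀ᶠ ε : ℝ in 𝓝[>] 0, 0 < F (θ + ε • (ei + ej)) - F (θ + ε • ei) :=
    eventually_pos_of_tendsto_div_nhdsGT (slope _ _) (by simpa using hj)
  have h34 : ∀ᶠ ε : ℝ in 𝓝[>] 0, 0 < F (θ + ε • ej) - F θ :=
    eventually_pos_of_tendsto_div_nhdsGT (by simpa using slope ej 0) (by simpa using hj)
  have hlim := (slope ei 0).abs
  simp only [smul_zero, add_zero, map_zero, sub_zero] at hlim
  refine hlim.congr' ?_
  filter_upwards [h12, h34, self_mem_nhdsWithin] with ε h₁₂ h₃₄ (hε : 0 < ε)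
  rw [min_add_min_sub_two_mul_min_min_eq_abs (by linarith) (by linarith), abs_div, abs_of_pos hε]
end
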